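/- arXiv:2111.13729 — 2 statements merged into one kernel-verified Lean document; each statement's English description precedes it below -/
import Mathlib

section
/- Let (X, d) be a pseudometric space and let a, b, c, d be points of X such that d(a,b) + d(c,d) ≤ d(a,c) + d(b,d) and d(a,b) + d(c,d) ≤ d(a,d) + d(b,c). Then d(a,b) + d(c,d) + min{d(a,c), d(a,d), d(b,c), d(b,d)} ≤ (1/2) · (d(a,b) + d(a,c) + d(a,d) + d(b,c) + d(b,d) + d(c,d)). -/
/-- In a pseudometric space, if the pairing `{a,b},{c,d}` minimizes the pairing sums,
then the branching-tree length bound holds: the sum `d(a,b) + d(c,d)` plus the minimum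
cross distance is at most half the sum of all six pairwise distances. -/
theorem stmt_3 {X : Type*} [PseudoMetricSpace X] (a b c d : X)
    (h1 : dist a b + dist c d ≤ dist a c + dist b d)
    (h2 : dist a b + dist c d ≤ dist a d + dist b c) :
    dist a b + dist c d +
        min (min (dist a c) (dist a d)) (min (dist b c) (dist b d)) ≤
      (1 / 2) * (dist a b + dist a c + dist a d + dist b c + dist b d + dist c d) := by
  have m1 : min (min (dist a c) (dist a d)) (min (dist b c) (dist b d)) ≤ dist a c :=
    le_trans (min_le_left _ _) (min_le_left _ _)
  have m2 : min (min (dist a c) (dist a d)) (min (dist b c) (dist b d)) ≤ dist b d :=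
    le_trans (min_le_right _ _) (min_le_right _ _)
  linarith
end

section
/- Let G be a finite connected simple graph and let a, b, c, d be vertices of G. Then there exists a subgraph H of G that contains a, b, c, d among its vertices, is connected, is acyclic, and whose number of edges e(H) satisfies 2 · e(H) ≤ dist(a,b) + dist(a,c) + dist(a,d) + dist(b,c) + dist(b,d) + dist(c,d), where dist denotes the shortest-path distance in G. -/
/-!
Union shortest paths from a center `x` to each of `a, b, c, d`: this is a connected subgraph
with at most `S x = ∑_y dist x y` edges, and any spanning tree of it is a bridge tree.
Since `S a + S b + S c + S d` counts every pairwise distance twice, the best of the four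
centers has `4 * S x ≤ 2 * ∑ dist`.
-/

namespace SimpleGraph

variable {V : Type*} {G : SimpleGraph V}

lemma Walk.ncard_edgeSet_toSubgraph_le {u v : V} (p : G.Walk u v) :
    p.toSubgraph.edgeSet.ncard ≤ p.length := by
  classical
  have hedges : p.toSubgraph.edgeSet = p.edges.toFinset := by
    ext; simp
  rw [hedges, Set.ncard_coe_finset, ← p.length_edges]
  exact p.edges.toFinset_card_le

lemma Connected.exists_connected_subgraph_ncard_edgeSet_le_sum_dist
    (hG : G.Connected) (x : V) (l : List V) :
    ∃ K : G.Subgraph, x ∈ K.verts ∧ (∀ y ∈ l, y ∈ K.verts) ∧ K.Connected ∧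
      K.edgeSet.ncard ≤ (l.map (G.dist x)).sum := by
  induction l with
  | nil =>
    exact ⟨G.singletonSubgraph x, rfl, by simp, Subgraph.singletonSubgraph_connected, by simp⟩
  | cons y l ih =>
    obtain ⟨K, hxK, hlK, hK, hcard⟩ := ih
    obtain ⟨p, hp⟩ := (hG.preconnected x y).exists_walk_length_eq_dist
    refine ⟨p.toSubgraph ⊔ K, Or.inr hxK, ?_, ?_, ?_⟩
    · simp only [List.mem_cons, forall_eq_or_imp]
      exact ⟨Or.inl p.end_mem_verts_toSubgraph, fun z hz => Or.inr (hlK z hz)⟩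
    · exact Subgraph.connected_sup p.toSubgraph_connected.preconnected hK.preconnected
        ⟨x, p.start_mem_verts_toSubgraph, hxK⟩
    · calc (p.toSubgraph ⊔ K).edgeSet.ncard
          ≤ p.toSubgraph.edgeSet.ncard + K.edgeSet.ncard := by
            rw [Subgraph.edgeSet_sup]; exact Set.ncard_union_le _ _
        _ ≤ ((y :: l).map (G.dist x)).sum := by
            rw [List.map_cons, List.sum_cons, ← hp]
            exact add_le_add p.ncard_edgeSet_toSubgraph_le hcard

lemma Subgraph.Connected.exists_isAcyclic_le {K : G.Subgraph} (hK : K.Connected) :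
    ∃ H ≤ K, H.verts = K.verts ∧ H.Connected ∧ H.coe.IsAcyclic := by
  obtain ⟨T, hTK, hT⟩ := hK.coe.exists_isTree_le
  let H : G.Subgraph :=
    { verts := K.verts
      Adj := fun u v => ∃ (hu : u ∈ K.verts) (hv : v ∈ K.verts), T.Adj ⟨u, hu⟩ ⟨v, hv⟩
      adj_sub := fun ⟨_, _, h⟩ => K.adj_sub (hTK h)
      edge_vert := fun ⟨hu, _, _⟩ => hu
      symm := ⟨fun _ _ ⟨hu, hv, h⟩ => ⟨hv, hu, h.symm⟩⟩ }
  have hHT : H.coe = T := by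
    ext ⟨u, hu⟩ ⟨v, hv⟩
    exact ⟨fun ⟨_, _, h⟩ => h, fun h => ⟨hu, hv, h⟩⟩
  refine ⟨H, ⟨le_rfl, fun u v ⟨_, _, h⟩ => hTK h⟩, rfl, ?_, ?_⟩
  · exact Subgraph.connected_iff'.mpr (hHT ▸ hT.connected)
  · exact hHT ▸ hT.isAcyclic

lemma Connected.exists_isAcyclic_subgraph_ncard_edgeSet_le_sum_dist [Finite V]
    (hG : G.Connected) (x : V) (l : List V) :
    ∃ H : G.Subgraph, (∀ y ∈ l, y ∈ H.verts) ∧ H.Connected ∧ H.coe.IsAcyclic ∧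
      H.edgeSet.ncard ≤ (l.map (G.dist x)).sum := by
  obtain ⟨K, -, hlK, hK, hcard⟩ := hG.exists_connected_subgraph_ncard_edgeSet_le_sum_dist x l
  obtain ⟨H, hHK, hverts, hH, hacyc⟩ := hK.exists_isAcyclic_le
  refine ⟨H, hverts ▸ hlK, hH, hacyc, ?_⟩
  exact (Set.ncard_le_ncard (Subgraph.edgeSet_mono hHK) (Set.toFinite _)).trans hcard

end SimpleGraph

/-- In a finite connected simple graph, for any four vertices `a, b, c, d` there is a
connected acyclic subgraph containing them whose number of edges is at most half the
sum of the six pairwise shortest-path distances. -/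
theorem stmt_5 {V : Type*} [Fintype V] (G : SimpleGraph V) (hG : G.Connected)
    (a b c d : V) :
    ∃ H : G.Subgraph, a ∈ H.verts ∧ b ∈ H.verts ∧ c ∈ H.verts ∧ d ∈ H.verts ∧
      H.Connected ∧ H.coe.IsAcyclic ∧
      2 * H.edgeSet.ncard ≤
        G.dist a b + G.dist a c + G.dist a d + G.dist b c + G.dist b d + G.dist c d := by
  have hcenter : ∃ x ∈ [a, b, c, d], 2 * ([a, b, c, d].map (G.dist x)).sum ≤
      G.dist a b + G.dist a c + G.dist a d + G.dist b c + G.dist b d + G.dist c d := by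
    by_contra! h
    simp only [List.mem_cons, List.map_cons, List.map_nil, List.sum_cons, List.sum_nil,
      forall_eq_or_imp, SimpleGraph.dist_self] at h
    rw [G.dist_comm (u := b) (v := a), G.dist_comm (u := c) (v := a),
      G.dist_comm (u := c) (v := b), G.dist_comm (u := d) (v := a),
      G.dist_comm (u := d) (v := b), G.dist_comm (u := d) (v := c)] at h
    omega
  obtain ⟨x, -, hx⟩ := hcenter
  obtain ⟨H, hmem, hH, hacyc, hcard⟩ :=
    hG.exists_isAcyclic_subgraph_ncard_edgeSet_le_sum_dist x [a, b, c, d]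
  simp only [List.mem_cons, List.not_mem_nil, forall_eq_or_imp] at hmem
  exact ⟨H, hmem.1, hmem.2.1, hmem.2.2.1, hmem.2.2.2.1, hH, hacyc, by omega⟩
end
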